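/- arXiv:2104.09965 — 2 statements merged into one kernel-verified Lean document; each statement's English description precedes it below -/
import Mathlib

section
/- For every 4-list assignment (ℓ_i)_{i≥1} (each ℓ_i a set of exactly 4 letters) and every n ≥ 1, the number of square-free words of length n that respect the list assignment is at least 2.45^n. -/
/-!
Build words letter by letter and let `C n` count the square-free ones of length `n`. Of the
`4 * C n` one-letter extensions, each bad one ends with a square of some period `p`. For `p ≤ 4`,
removing the new letter leaves a word ending with `2p - 1` letters of period `p`; for `p ≥ 5` the
extension is determined by the word of length `n + 1 - p` obtained by deleting the second half of
the square. Similar injections bound how many words end with short periodic blocks. A linear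
combination `Φ` of these counts with `0.3303 * C ≤ Φ ≤ C` then satisfies `2.45 * Φ n ≤ Φ (n + 1)`
by strong induction, the long periods being controlled by the growth already established.
-/

def SquareFree {α : Type*} (w : List α) : Prop :=
  ∀ u : List α, u ≠ [] → ¬ (u ++ u) <:+: w

def Respects {α : Type*} (ℓ : ℕ → Finset α) (w : List α) : Prop :=
  ∀ (i : ℕ) (h : i < w.length), w[i] ∈ ℓ i

variable {α : Type*}

theorem SquareFree.of_infix {v w : List α} (hw : SquareFree w) (h : v <:+: w) : SquareFree v :=
  fun u hu huv => hw u hu (huv.trans h)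

theorem squareFree_nil : SquareFree ([] : List α) :=
  fun _ hu h => hu (List.append_eq_nil_iff.mp (List.eq_nil_of_infix_nil h)).1

theorem squareFree_reverse_iff {w : List α} : SquareFree w.reverse ↔ SquareFree w := by
  suffices ∀ w : List α, SquareFree w → SquareFree w.reverse from
    ⟨fun h => by simpa using this _ h, this w⟩
  intro w hw u hu huw
  refine hw u.reverse (by simpa using hu) ?_
  simpa using List.reverse_infix.mpr huw

theorem respects_append_singleton {ℓ : ℕ → Finset α} {w : List α} {c : α} :
    Respects ℓ (w ++ [c]) ↔ Respects ℓ w ∧ c ∈ ℓ w.length := by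
  simp only [Respects, List.length_append, List.length_singleton, Nat.forall_lt_succ_right',
    List.getElem_concat_length]
  refine and_congr_left' (forall₂_congr fun i hi => ?_)
  rw [List.getElem_append_left hi]

def PeriodicPrefix (p k : ℕ) (w : List α) : Prop :=
  ∀ j < k, j + p < w.length ∧ w[j]? = w[j + p]?

namespace PeriodicPrefix

variable {p k : ℕ} {w : List α}

theorem zero : PeriodicPrefix p 0 w := fun _ h => absurd h (Nat.not_lt_zero _)

theorem mono {j : ℕ} (h : PeriodicPrefix p k w) (hjk : j ≤ k) : PeriodicPrefix p j w :=
  fun i hi => h i (lt_of_lt_of_le hi hjk)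

theorem succ_cons_iff {c : α} {r : List α} :
    PeriodicPrefix (p + 1) (k + 1) (c :: r) ↔ r[p]? = some c ∧ PeriodicPrefix (p + 1) k r := by
  have e : ∀ j, j + 1 + (p + 1) = j + (p + 1) + 1 := fun j => by omega
  simp only [PeriodicPrefix, Nat.forall_lt_succ_left, List.length_cons, zero_add,
    List.getElem?_cons_zero, e, List.getElem?_cons_succ, Nat.add_lt_add_iff_right,
    eq_comm (a := some c)]
  exact and_congr_left fun _ => ⟨And.right, fun h => ⟨(List.getElem?_eq_some_iff.mp h).1, h⟩⟩

theorem take_drop (h : PeriodicPrefix p p w) : (w.drop p).take p = w.take p := by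
  refine List.ext_getElem? fun i => ?_
  simp only [List.getElem?_take, List.getElem?_drop]
  split_ifs with hi
  · rw [(h i hi).2, Nat.add_comm]
  · rfl

theorem eq_of_drop_eq {v : List α} (hv : PeriodicPrefix p p v) (hw : PeriodicPrefix p p w)
    (h : v.drop p = w.drop p) : v = w := by
  rw [← List.take_append_drop p v, ← List.take_append_drop p w, ← hv.take_drop, ← hw.take_drop, h]

theorem square_prefix (h : PeriodicPrefix p p w) : w.take p ++ w.take p <+: w := by
  refine ⟨(w.drop p).drop p, ?_⟩
  conv_rhs => rw [← List.take_append_drop p w, ← List.take_append_drop p (w.drop p), h.take_drop]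
  rw [List.append_assoc]

theorem not_squareFree (hp : 0 < p) (h : PeriodicPrefix p p w) : ¬ SquareFree w := by
  intro hw
  refine hw _ ?_ h.square_prefix.isInfix
  have := (h 0 hp).1
  simp only [Ne, List.take_eq_nil_iff, not_or]
  exact ⟨hp.ne', List.ne_nil_of_length_pos (by omega)⟩

theorem of_square_prefix {u : List α} (h : u ++ u <+: w) : PeriodicPrefix u.length u.length w := by
  obtain ⟨t, rfl⟩ := h
  intro j hj
  refine ⟨by simp; omega, ?_⟩
  rw [List.append_assoc, List.getElem?_append_left hj, List.getElem?_append_right (by omega),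
    Nat.add_sub_cancel, List.getElem?_append_left hj]

theorem eq_of_tail_eq {v : List α} (hv : PeriodicPrefix (p + 1) (k + 1) v)
    (hw : PeriodicPrefix (p + 1) (k + 1) w) (h : v.tail = w.tail) : v = w := by
  cases v with
  | nil => exact absurd (hv 0 k.succ_pos).1 (Nat.not_lt_zero _)
  | cons a r =>
    cases w with
    | nil => exact absurd (hw 0 k.succ_pos).1 (Nat.not_lt_zero _)
    | cons b s =>
      obtain rfl : r = s := h
      rw [succ_cons_iff] at hv hw
      rw [Option.some_injective _ (hv.1.symm.trans hw.1)]

theorem not_squareFree_of_succ (h : PeriodicPrefix p 1 w) (h' : PeriodicPrefix (p + 1) 1 w) :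
    ¬ SquareFree w := by
  intro hw
  refine not_squareFree Nat.one_pos (w := w.drop p) ?_ (hw.of_infix (List.drop_suffix p w).isInfix)
  obtain ⟨-, h⟩ := h 0 Nat.one_pos
  obtain ⟨hlen, h'⟩ := h' 0 Nat.one_pos
  intro j hj
  obtain rfl : j = 0 := by omega
  simp only [List.length_drop, List.getElem?_drop, zero_add, add_zero] at h h' ⊢
  exact ⟨by omega, h.symm.trans h'⟩

end PeriodicPrefix

/-- The square must contain the new letter `c`, so it is a prefix. -/
theorem exists_periodicPrefix_of_not_squareFree_cons {c : α} {r : List α} (hr : SquareFree r)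
    (h : ¬ SquareFree (c :: r)) : ∃ p, 0 < p ∧ PeriodicPrefix p p (c :: r) := by
  simp only [SquareFree, not_forall, not_not] at h
  obtain ⟨u, hu, s, t, hst⟩ := h
  cases s with
  | nil => exact ⟨u.length, List.length_pos_iff.mpr hu, .of_square_prefix ⟨t, by simpa using hst⟩⟩
  | cons a s =>
    obtain ⟨-, rfl⟩ := List.cons_eq_cons.mp hst
    exact absurd ⟨s, t, rfl⟩ (hr u hu)

theorem Finset.card_add_card_le_of_injOn {β γ : Type*} [DecidableEq γ] {s : Finset β}
    {t u : Finset γ} (f : β → γ) (hf : Set.InjOn f s) (hst : ∀ x ∈ s, f x ∈ t)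
    (hsu : ∀ x ∈ s, f x ∉ u) (hut : u ⊆ t) : s.card + u.card ≤ t.card := by
  have := Finset.card_le_card_of_injOn f (t := t \ u)
    (fun x hx => Finset.mem_sdiff.mpr ⟨hst x hx, hsu x hx⟩) hf
  rw [← Finset.card_sdiff_add_card_eq_card hut]
  omega

theorem pow_mul_le_of_forall_lt {u : ℕ → ℝ} {c : ℝ} (hc : 0 ≤ c) {n : ℕ}
    (h : ∀ m < n, c * u m ≤ u (m + 1)) {i : ℕ} (hi : i ≤ n) : c ^ i * u (n - i) ≤ u n := by
  induction i with
  | zero => simp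
  | succ i ih =>
    calc c ^ (i + 1) * u (n - (i + 1)) = c ^ i * (c * u (n - (i + 1))) := by ring
      _ ≤ c ^ i * u (n - i) := by
        gcongr
        have := h (n - (i + 1)) (by omega)
        rwa [show n - (i + 1) + 1 = n - i by omega] at this
      _ ≤ u n := ih (by omega)

namespace ListAssignment

open Finset

variable (ℓ : ℕ → Finset α)

open Classical in
/-- Words are stored reversed: `r ∈ words ℓ n` has its letter `r[i]` in `ℓ (n - 1 - i)`, so that
appending a letter to a word respecting `ℓ` is `List.cons`. -/
noncomputable def words : ℕ → Finset (List α)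
  | 0 => {[]}
  | n + 1 => (ℓ n ×ˢ words n).image fun q => q.1 :: q.2

open Classical in
noncomputable def sqfWords (n : ℕ) : Finset (List α) :=
  (words ℓ n).filter SquareFree

open Classical in
noncomputable def periodicWords (p k n : ℕ) : Finset (List α) :=
  (sqfWords ℓ n).filter (PeriodicPrefix p k)

open Classical in
noncomputable def extensions (n : ℕ) : Finset (List α) :=
  (ℓ n ×ˢ sqfWords ℓ n).image fun q => q.1 :: q.2

variable {ℓ}

theorem cons_mem_words {c : α} {r : List α} {n : ℕ} :
    c :: r ∈ words ℓ (n + 1) ↔ c ∈ ℓ n ∧ r ∈ words ℓ n := by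
  simp [words]

theorem length_of_mem_words {r : List α} {n : ℕ} (h : r ∈ words ℓ n) : r.length = n := by
  induction n generalizing r with
  | zero => simpa [words] using h
  | succ n ih =>
    cases r with
    | nil => simp [words] at h
    | cons c r => simpa using ih (cons_mem_words.mp h).2

theorem mem_words_iff {r : List α} {n : ℕ} :
    r ∈ words ℓ n ↔ r.length = n ∧ Respects ℓ r.reverse := by
  induction n generalizing r with
  | zero =>
    simp only [words, mem_singleton, List.length_eq_zero_iff, iff_self_and]
    rintro rfl _ h
    exact absurd h (Nat.not_lt_zero _)
  | succ n ih =>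
    cases r with
    | nil => simp [words]
    | cons c r =>
      rw [cons_mem_words, ih, List.reverse_cons, respects_append_singleton, List.length_reverse]
      simp only [List.length_cons, Nat.add_right_cancel_iff]
      constructor
      · rintro ⟨hc, rfl, hr⟩
        exact ⟨rfl, hr, hc⟩
      · rintro ⟨rfl, hr, hc⟩
        exact ⟨hc, rfl, hr⟩

theorem drop_mem_words {r : List α} {n : ℕ} (h : r ∈ words ℓ n) (i : ℕ) :
    r.drop i ∈ words ℓ (n - i) := by
  induction r generalizing n i with
  | nil =>
    obtain rfl : n = 0 := (length_of_mem_words h).symm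
    simpa using h
  | cons c r ih =>
    obtain ⟨m, rfl⟩ : ∃ m, n = m + 1 := ⟨r.length, (length_of_mem_words h).symm⟩
    cases i with
    | zero => exact h
    | succ i => simpa using ih (cons_mem_words.mp h).2 i

theorem mem_sqfWords {r : List α} {n : ℕ} : r ∈ sqfWords ℓ n ↔ r ∈ words ℓ n ∧ SquareFree r := by
  simp [sqfWords]

theorem mem_periodicWords {r : List α} {p k n : ℕ} :
    r ∈ periodicWords ℓ p k n ↔ r ∈ sqfWords ℓ n ∧ PeriodicPrefix p k r := by
  simp [periodicWords]

theorem mem_extensions {v : List α} {n : ℕ} :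
    v ∈ extensions ℓ n ↔ ∃ c r, v = c :: r ∧ c ∈ ℓ n ∧ r ∈ sqfWords ℓ n := by
  simp only [extensions, mem_image, mem_product, Prod.exists]
  constructor
  · rintro ⟨c, r, ⟨hc, hr⟩, rfl⟩
    exact ⟨c, r, rfl, hc, hr⟩
  · rintro ⟨c, r, rfl, hc, hr⟩
    exact ⟨c, r, ⟨hc, hr⟩, rfl⟩

theorem drop_mem_sqfWords {r : List α} {n : ℕ} (h : r ∈ sqfWords ℓ n) (i : ℕ) :
    r.drop i ∈ sqfWords ℓ (n - i) := by
  rw [mem_sqfWords] at h ⊢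
  exact ⟨drop_mem_words h.1 i, h.2.of_infix (List.drop_suffix i r).isInfix⟩

theorem exists_cons_of_mem_periodicWords {v : List α} {p k n : ℕ}
    (h : v ∈ periodicWords ℓ (p + 1) (k + 1) (n + 1)) :
    ∃ c r, v = c :: r ∧ r[p]? = some c ∧ SquareFree (c :: r) ∧ r ∈ periodicWords ℓ (p + 1) k n := by
  obtain ⟨hv, hper⟩ := mem_periodicWords.mp h
  obtain ⟨hw, hsq⟩ := mem_sqfWords.mp hv
  cases v with
  | nil => exact absurd (hper 0 k.succ_pos).1 (Nat.not_lt_zero _)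
  | cons c r =>
    rw [PeriodicPrefix.succ_cons_iff] at hper
    refine ⟨c, r, rfl, hper.1, hsq, mem_periodicWords.mpr ⟨?_, hper.2⟩⟩
    exact mem_sqfWords.mpr ⟨(cons_mem_words.mp hw).2, hsq.of_infix (List.suffix_cons c r).isInfix⟩

/-- Deleting the new letter is injective since that letter is `r[p]`. -/
theorem card_periodicWords_succ_add_card_le {p k n : ℕ} {U : Finset (List α)}
    (hU : U ⊆ periodicWords ℓ (p + 1) k n)
    (hsq : ∀ c r, r[p]? = some c → r ∈ U → ¬ SquareFree (c :: r)) :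
    (periodicWords ℓ (p + 1) (k + 1) (n + 1)).card + U.card ≤
      (periodicWords ℓ (p + 1) k n).card := by
  classical
  refine card_add_card_le_of_injOn List.tail ?_ ?_ ?_ hU
  · intro v hv w hw hvw
    exact (mem_periodicWords.mp hv).2.eq_of_tail_eq (mem_periodicWords.mp hw).2 hvw
  · intro v hv
    obtain ⟨c, r, rfl, -, -, hr⟩ := exists_cons_of_mem_periodicWords hv
    exact hr
  · intro v hv hvU
    obtain ⟨c, r, rfl, hc, hsf, -⟩ := exists_cons_of_mem_periodicWords hv
    exact hsq c r hc hvU hsf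

variable (ℓ)

theorem periodicWords_zero (p n : ℕ) : periodicWords ℓ p 0 n = sqfWords ℓ n := by
  classical
  exact filter_true_of_mem fun _ _ => PeriodicPrefix.zero

theorem periodicWords_subset (p k n : ℕ) : periodicWords ℓ p k n ⊆ sqfWords ℓ n :=
  fun _ h => (mem_periodicWords.mp h).1

theorem periodicWords_anti {p j k : ℕ} (hjk : j ≤ k) (n : ℕ) :
    periodicWords ℓ p k n ⊆ periodicWords ℓ p j n := by
  intro r h
  rw [mem_periodicWords] at h ⊢
  exact ⟨h.1, h.2.mono hjk⟩

theorem card_periodicWords_succ_add_le {p k : ℕ} (hk : k ≤ p) (n : ℕ) :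
    (periodicWords ℓ (p + 1) (k + 1) (n + 1)).card + (periodicWords ℓ (p + 1) p n).card ≤
      (periodicWords ℓ (p + 1) k n).card := by
  refine card_periodicWords_succ_add_card_le (periodicWords_anti ℓ hk n) fun c r hc hr => ?_
  refine PeriodicPrefix.not_squareFree p.succ_pos ?_
  exact PeriodicPrefix.succ_cons_iff.mpr ⟨hc, (mem_periodicWords.mp hr).2⟩

theorem card_periodicWords_one_add_le (p n : ℕ) :
    (periodicWords ℓ (p + 2) 1 (n + 1)).card + (periodicWords ℓ (p + 1) 1 n).card ≤
      (sqfWords ℓ n).card := by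
  rw [← periodicWords_zero ℓ (p + 2)]
  refine card_periodicWords_succ_add_card_le ?_ fun c r hc hr => ?_
  · rw [periodicWords_zero]
    exact periodicWords_subset ℓ _ _ n
  · obtain ⟨-, hr0⟩ := (mem_periodicWords.mp hr).2 0 Nat.one_pos
    refine PeriodicPrefix.not_squareFree Nat.one_pos ?_
    refine PeriodicPrefix.succ_cons_iff.mpr ⟨?_, PeriodicPrefix.zero⟩
    rw [hr0, zero_add, hc]

theorem card_periodicWords_one_add_succ_le (p n : ℕ) :
    (periodicWords ℓ p 1 n).card + (periodicWords ℓ (p + 1) 1 n).card ≤ (sqfWords ℓ n).card := by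
  classical
  have hdisj : Disjoint (periodicWords ℓ p 1 n) (periodicWords ℓ (p + 1) 1 n) := by
    refine disjoint_left.mpr fun r hr hr' => ?_
    obtain ⟨hsqf, hp⟩ := mem_periodicWords.mp hr
    exact hp.not_squareFree_of_succ (mem_periodicWords.mp hr').2 (mem_sqfWords.mp hsqf).2
  rw [← card_union_of_disjoint hdisj]
  exact card_le_card (union_subset (periodicWords_subset ℓ _ _ n) (periodicWords_subset ℓ _ _ n))

theorem card_extensions (n : ℕ) : (extensions ℓ n).card = (ℓ n).card * (sqfWords ℓ n).card := by
  classical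
  rw [extensions, card_image_of_injective _ fun q q' h => Prod.ext (List.cons.inj h).1
    (List.cons.inj h).2, card_product]

open Classical in
theorem card_filter_extensions_le_periodicWords (p n : ℕ) :
    ((extensions ℓ n).filter (PeriodicPrefix (p + 1) (p + 1))).card ≤
      (periodicWords ℓ (p + 1) p n).card := by
  refine card_le_card_of_injOn List.tail (fun v hv => ?_) fun v hv w hw hvw => ?_
  · obtain ⟨hv, hper⟩ := mem_filter.mp hv
    obtain ⟨c, r, rfl, -, hr⟩ := mem_extensions.mp hv
    exact mem_periodicWords.mpr ⟨hr, (PeriodicPrefix.succ_cons_iff.mp hper).2⟩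
  · exact (mem_filter.mp hv).2.eq_of_tail_eq (mem_filter.mp hw).2 hvw

open Classical in
theorem card_filter_extensions_le_sqfWords (p n : ℕ) :
    ((extensions ℓ n).filter (PeriodicPrefix (p + 1) (p + 1))).card ≤
      (sqfWords ℓ (n - p)).card := by
  refine card_le_card_of_injOn (List.drop (p + 1)) (fun v hv => ?_) fun v hv w hw hvw => ?_
  · obtain ⟨c, r, rfl, -, hr⟩ := mem_extensions.mp (mem_filter.mp hv).1
    exact drop_mem_sqfWords hr p
  · exact (mem_filter.mp hv).2.eq_of_drop_eq (mem_filter.mp hw).2 hvw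

/-- Every extension of a square-free word is square-free or ends with a square of some period
`i + 1 ≤ (n + 1) / 2`; such extensions are counted through their tail when `i < q` and through the
word left after deleting one half of the square otherwise. -/
theorem card_mul_card_sqfWords_le (n q : ℕ) :
    (ℓ n).card * (sqfWords ℓ n).card ≤ (sqfWords ℓ (n + 1)).card +
      ∑ i ∈ range q, (periodicWords ℓ (i + 1) i n).card +
      ∑ i ∈ Ico q ((n + 1) / 2), (sqfWords ℓ (n - i)).card := by
  classical
  set bad := fun i => (extensions ℓ n).filter (PeriodicPrefix (i + 1) (i + 1))
  have hgood : (extensions ℓ n).filter SquareFree ⊆ sqfWords ℓ (n + 1) := by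
    intro v hv
    obtain ⟨hv, hsf⟩ := mem_filter.mp hv
    obtain ⟨c, r, rfl, hc, hr⟩ := mem_extensions.mp hv
    exact mem_sqfWords.mpr ⟨cons_mem_words.mpr ⟨hc, (mem_sqfWords.mp hr).1⟩, hsf⟩
  have hbad : (extensions ℓ n).filter (¬ SquareFree ·) ⊆
      (range q).biUnion bad ∪ (Ico q ((n + 1) / 2)).biUnion bad := by
    intro v hv
    obtain ⟨hv, hsf⟩ := mem_filter.mp hv
    obtain ⟨c, r, rfl, hc, hr⟩ := mem_extensions.mp hv
    obtain ⟨hrw, hrsf⟩ := mem_sqfWords.mp hr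
    obtain ⟨p, hp, hper⟩ := exists_periodicPrefix_of_not_squareFree_cons hrsf hsf
    obtain ⟨i, rfl⟩ : ∃ i, p = i + 1 := ⟨p - 1, by omega⟩
    have hlen := (hper i i.lt_succ_self).1
    rw [List.length_cons, length_of_mem_words hrw] at hlen
    have hvbad : c :: r ∈ bad i := mem_filter.mpr ⟨hv, hper⟩
    simp only [mem_union, mem_biUnion, mem_range, mem_Ico]
    by_cases hiq : i < q
    · exact .inl ⟨i, hiq, hvbad⟩
    · exact .inr ⟨i, ⟨by omega, by omega⟩, hvbad⟩
  calc (ℓ n).card * (sqfWords ℓ n).card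
      = ((extensions ℓ n).filter SquareFree).card +
          ((extensions ℓ n).filter (¬ SquareFree ·)).card := by
        rw [card_filter_add_card_filter_not, card_extensions]
    _ ≤ (sqfWords ℓ (n + 1)).card +
          (∑ i ∈ range q, (bad i).card + ∑ i ∈ Ico q ((n + 1) / 2), (bad i).card) :=
        add_le_add (card_le_card hgood) ((card_le_card hbad).trans ((card_union_le _ _).trans
          (add_le_add card_biUnion_le card_biUnion_le)))
    _ ≤ _ := by
      rw [add_assoc]
      exact add_le_add le_rfl (add_le_add
        (sum_le_sum fun i _ => card_filter_extensions_le_periodicWords ℓ i n)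
        (sum_le_sum fun i _ => card_filter_extensions_le_sqfWords ℓ i n))

theorem sqfWords_zero : sqfWords ℓ 0 = {[]} := by
  ext r
  simp only [mem_sqfWords, words, mem_singleton, and_iff_left_iff_imp]
  rintro rfl
  exact squareFree_nil

theorem periodicWords_succ_zero (p k : ℕ) : periodicWords ℓ p (k + 1) 0 = ∅ := by
  refine eq_empty_of_forall_notMem fun r hr => ?_
  obtain ⟨hr, hper⟩ := mem_periodicWords.mp hr
  have := (hper 0 k.succ_pos).1
  rw [length_of_mem_words (mem_sqfWords.mp hr).1] at this
  exact Nat.not_lt_zero _ this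

/-- The weights are chosen so that the counting inequalities combine linearly into
`potential_succ_ge`, while the potential stays above `0.3303` times the number of words. -/
noncomputable def potential (n : ℕ) : ℝ :=
  (sqfWords ℓ n).card - 0.2607 * (periodicWords ℓ 2 1 n).card -
    0.1007 * (periodicWords ℓ 3 1 n).card - 0.29 * (periodicWords ℓ 3 2 n).card -
    0.0433 * (periodicWords ℓ 4 1 n).card - 0.106 * (periodicWords ℓ 4 2 n).card -
    0.2597 * (periodicWords ℓ 4 3 n).card

theorem potential_le_card (n : ℕ) : potential ℓ n ≤ (sqfWords ℓ n).card := by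
  have hx (p k : ℕ) : (0 : ℝ) ≤ (periodicWords ℓ p k n).card := Nat.cast_nonneg _
  rw [potential]
  linarith [hx 2 1, hx 3 1, hx 3 2, hx 4 1, hx 4 2, hx 4 3]

theorem card_mul_le_potential (n : ℕ) : 0.3303 * (sqfWords ℓ n).card ≤ potential ℓ n := by
  have h23 := card_periodicWords_one_add_succ_le ℓ 2 n
  have h34 := card_periodicWords_one_add_succ_le ℓ 3 n
  have h32 := card_le_card (periodicWords_anti ℓ (p := 3) (by norm_num : 1 ≤ 2) n)
  have h42 := card_le_card (periodicWords_anti ℓ (p := 4) (by norm_num : 1 ≤ 2) n)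
  have h43 := card_le_card (periodicWords_anti ℓ (p := 4) (by norm_num : 1 ≤ 3) n)
  rify at h23 h34 h32 h42 h43
  rw [potential]
  linarith [(periodicWords ℓ 3 1 n).card.cast_nonneg (α := ℝ)]

theorem potential_zero : potential ℓ 0 = 1 := by
  simp [potential, sqfWords_zero, periodicWords_succ_zero]

theorem sum_card_sqfWords_le (n : ℕ)
    (hgrow : ∀ m < n, 2.45 * potential ℓ m ≤ potential ℓ (m + 1)) :
    ∑ i ∈ Ico 4 ((n + 1) / 2), ((sqfWords ℓ (n - i)).card : ℝ) ≤ 0.142 * (sqfWords ℓ n).card := by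
  have hterm : ∀ i ∈ Ico 4 ((n + 1) / 2),
      ((sqfWords ℓ (n - i)).card : ℝ) ≤ 2.45⁻¹ ^ i * ((sqfWords ℓ n).card / 0.3303 : ℝ) := by
    intro i hi
    have hin : i ≤ n := by
      rw [mem_Ico] at hi
      omega
    have hpow : (0 : ℝ) < 2.45 ^ i := by positivity
    have := (mul_le_mul_of_nonneg_left (card_mul_le_potential ℓ (n - i)) hpow.le).trans
      ((pow_mul_le_of_forall_lt (by norm_num) hgrow hin).trans (potential_le_card ℓ n))
    rw [inv_pow, ← div_eq_inv_mul, le_div_iff₀ hpow, le_div_iff₀ (by norm_num)]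
    linarith
  calc ∑ i ∈ Ico 4 ((n + 1) / 2), ((sqfWords ℓ (n - i)).card : ℝ)
      ≤ ∑ i ∈ Ico 4 ((n + 1) / 2), (2.45⁻¹ : ℝ) ^ i * ((sqfWords ℓ n).card / 0.3303) :=
        sum_le_sum hterm
    _ ≤ (2.45⁻¹ : ℝ) ^ 4 / (1 - 2.45⁻¹) * ((sqfWords ℓ n).card / 0.3303) := by
        rw [← sum_mul]
        gcongr
        exact geom_sum_Ico_le_of_lt_one (by norm_num) (by norm_num)
    _ = (2.45⁻¹ : ℝ) ^ 4 / (1 - 2.45⁻¹) / 0.3303 * (sqfWords ℓ n).card := by ring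
    _ ≤ 0.142 * (sqfWords ℓ n).card := by
        gcongr
        norm_num

theorem potential_succ_ge (h4 : ∀ i, 4 ≤ (ℓ i).card) (n : ℕ)
    (hgrow : ∀ m < n, 2.45 * potential ℓ m ≤ potential ℓ (m + 1)) :
    2.45 * potential ℓ n ≤ potential ℓ (n + 1) := by
  have hext := (Nat.mul_le_mul_right _ (h4 n)).trans (card_mul_card_sqfWords_le ℓ n 4)
  simp only [sum_range_succ, sum_range_zero, periodicWords_zero, Nat.reduceAdd, zero_add] at hext
  have h21 := card_periodicWords_succ_add_le ℓ (p := 1) (k := 0) (by norm_num) n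
  have h31 := card_periodicWords_one_add_le ℓ 1 n
  have h32 := card_periodicWords_succ_add_le ℓ (p := 2) (k := 1) (by norm_num) n
  have h41 := card_periodicWords_one_add_le ℓ 2 n
  have h42 := card_periodicWords_succ_add_le ℓ (p := 3) (k := 1) (by norm_num) n
  have h43 := card_periodicWords_succ_add_le ℓ (p := 3) (k := 2) (by norm_num) n
  rw [periodicWords_zero] at h21
  rify at hext h21 h31 h32 h41 h42 h43
  have htail := sum_card_sqfWords_le ℓ n hgrow
  have hx (p k : ℕ) : (0 : ℝ) ≤ (periodicWords ℓ p k n).card := Nat.cast_nonneg _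
  rw [potential, potential]
  linarith [hx 2 1, hx 3 1, hx 3 2, hx 4 1, hx 4 2, hx 4 3,
    (sqfWords ℓ n).card.cast_nonneg (α := ℝ)]

theorem pow_le_card_sqfWords (h4 : ∀ i, 4 ≤ (ℓ i).card) (n : ℕ) :
    (2.45 : ℝ) ^ n ≤ (sqfWords ℓ n).card := by
  have hgrow : ∀ m, 2.45 * potential ℓ m ≤ potential ℓ (m + 1) := fun m =>
    Nat.strong_induction_on m fun m ih => potential_succ_ge ℓ h4 m ih
  have := pow_mul_le_of_forall_lt (by norm_num) (fun m _ => hgrow m) (le_refl n)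
  rw [Nat.sub_self, potential_zero, mul_one] at this
  exact this.trans (potential_le_card ℓ n)

theorem setOf_squareFree_respects_eq_image (n : ℕ) :
    {w : List α | w.length = n ∧ SquareFree w ∧ Respects ℓ w} =
      List.reverse '' (sqfWords ℓ n : Set (List α)) := by
  rw [Set.image_eq_preimage_of_inverse List.reverse_reverse List.reverse_reverse]
  ext w
  simp only [Set.mem_ofPred_eq, Set.mem_preimage, mem_coe, mem_sqfWords, mem_words_iff,
    List.length_reverse, List.reverse_reverse, squareFree_reverse_iff]
  tauto

end ListAssignment

theorem stmt0_general (ℓ : ℕ → Finset ℕ) (h4 : ∀ i, (ℓ i).card = 4) (n : ℕ) :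
    (2.45 : ℝ) ^ n ≤
      ({w : List ℕ | w.length = n ∧ SquareFree w ∧ Respects ℓ w}.ncard : ℝ) := by
  rw [ListAssignment.setOf_squareFree_respects_eq_image,
    Set.ncard_image_of_injective _ List.reverse_injective, Set.ncard_coe_finset]
  exact ListAssignment.pow_le_card_sqfWords ℓ (fun i => (h4 i).ge) n

/-- For every 4-list assignment and every `n ≥ 1`, there are at least `2.45 ^ n`
square-free words of length `n` respecting the assignment. -/
theorem stmt0 (ℓ : ℕ → Finset ℕ) (h4 : ∀ i, (ℓ i).card = 4) (n : ℕ) (hn : 1 ≤ n) :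
    (2.45 : ℝ) ^ n ≤
      ({w : List ℕ | w.length = n ∧ SquareFree w ∧ Respects ℓ w}.ncard : ℝ) :=
  stmt0_general ℓ h4 n
end

section
/- Let u be a square-free word of length at least 3 that is perfect, i.e., its last three letters are pairwise distinct, and let ℓ be any set of exactly 4 letters. Let N = {d ∈ ℓ : the word ud contains no square of period 1 and no square of period 2}. Then (number of d ∈ N such that ud is perfect) + (√3 − 1)·(number of d ∈ N such that ud is nice) ≥ 1 + √3. -/
open scoped Classical

/-- `w` contains a square of period exactly `k`. -/
def ContainsSquareOfPeriod {α : Type*} (w : List α) (k : ℕ) : Prop :=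
  ∃ u : List α, u ≠ [] ∧ u.length = k ∧ (u ++ u) <:+: w

/-- A word is perfect if its suffix of length 3 consists of three pairwise distinct letters. -/
def PerfectWord {α : Type*} (w : List α) : Prop :=
  ∃ a b c : α, a ≠ b ∧ a ≠ c ∧ b ≠ c ∧ [a, b, c] <:+ w

/-- A word is nice if its suffix of length 3 is of the form `aba` with `a ≠ b`. -/
def NiceWord {α : Type*} (w : List α) : Prop :=
  ∃ a b : α, a ≠ b ∧ [a, b, a] <:+ w

private lemma infix_concat_cases {α : Type*} {s w : List α} {d : α}
    (h : s <:+: (w ++ [d])) : s <:+: w ∨ s <:+ (w ++ [d]) := by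
  obtain ⟨p, q, hpq⟩ := h
  rcases List.eq_nil_or_concat q with rfl | ⟨q', d', rfl⟩
  · right; exact ⟨p, by simpa using hpq⟩
  · left
    have h1 : (p ++ s ++ q') ++ [d'] = w ++ [d] := by
      simpa [List.append_assoc] using hpq
    have h2 := List.append_inj' h1 (by simp)
    exact ⟨p, q', by simpa [List.append_assoc] using h2.1⟩

private lemma no_squares {α : Type*} {u : List α} {a b c d : α}
    (hsf : SquareFree u) (hab : a ≠ b) (hac : a ≠ c) (hbc : b ≠ c)
    (hsuf : [a, b, c] <:+ u) (hdc : d ≠ c) :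
    ¬ ContainsSquareOfPeriod (u ++ [d]) 1 ∧ ¬ ContainsSquareOfPeriod (u ++ [d]) 2 := by
  obtain ⟨s, hs⟩ := hsuf
  constructor
  · rintro ⟨v, hv, hlen1, hinf⟩
    obtain ⟨x, rfl⟩ : ∃ x, v = [x] := by
      cases v with
      | nil => simp at hlen1
      | cons x t => cases t with
        | nil => exact ⟨x, rfl⟩
        | cons y t' => simp at hlen1
    rcases infix_concat_cases hinf with h | ⟨t, ht⟩
    · exact hsf [x] (by simp) h
    · -- t ++ [x,x] = u ++ [d], so x = d and t ++ [x] = u, last of u is c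
      have h1 : (t ++ [x]) ++ [x] = u ++ [d] := by simpa [List.append_assoc] using ht
      have h2 := List.append_inj' h1 (by simp)
      have hx : x = d := by simpa using h2.2
      -- t ++ [x] = u and s ++ [a,b,c] = u
      have h3 : (t ++ [x]) = (s ++ [a, b]) ++ [c] := by
        rw [h2.1, ← hs]; simp [List.append_assoc]
      have h4 := List.append_inj' h3 (by simp)
      have hxc : x = c := by simpa using h4.2
      exact hdc (by rw [← hx, hxc])
  · rintro ⟨v, hv, hlen2, hinf⟩
    obtain ⟨x, y, rfl⟩ : ∃ x y, v = [x, y] := by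
      match v, hlen2 with
      | [x, y], _ => exact ⟨x, y, rfl⟩
    rcases infix_concat_cases hinf with h | ⟨t, ht⟩
    · exact hsf [x, y] (by simp) h
    · -- t ++ [x,y,x,y] = u ++ [d], so t ++ [x,y,x] = u
      have h1 : (t ++ [x, y, x]) ++ [y] = u ++ [d] := by
        simpa [List.append_assoc] using ht
      have h2 := List.append_inj' h1 (by simp)
      have h3 : t ++ [x, y, x] = s ++ [a, b, c] := by rw [h2.1, hs]
      have h4 := List.append_inj' h3 (by simp)
      have : x = a ∧ y = b ∧ x = c := by
        have := h4.2
        simp at this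
        exact this
      exact hac (this.1 ▸ this.2.2 ▸ rfl)

/-- For any perfect square-free word `u` of length at least 3 and any set `ℓ` of 4
letters, letting `N = {d ∈ ℓ : ud has no square of period 1 or 2}`, the number of
`d ∈ N` with `ud` perfect plus `√3 - 1` times the number of `d ∈ N` with `ud` nice
is at least `1 + √3`. -/
theorem stmt6 {α : Type*} (u : List α) (hsf : SquareFree u) (hlen : 3 ≤ u.length)
    (hperf : PerfectWord u) (ℓ : Finset α) (hcard : ℓ.card = 4) :
    (1 : ℝ) + Real.sqrt 3 ≤
      ((ℓ.filter fun d => ¬ ContainsSquareOfPeriod (u ++ [d]) 1 ∧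
          ¬ ContainsSquareOfPeriod (u ++ [d]) 2 ∧ PerfectWord (u ++ [d])).card : ℝ) +
      (Real.sqrt 3 - 1) *
      ((ℓ.filter fun d => ¬ ContainsSquareOfPeriod (u ++ [d]) 1 ∧
          ¬ ContainsSquareOfPeriod (u ++ [d]) 2 ∧ NiceWord (u ++ [d])).card : ℝ) := by
  obtain ⟨a, b, c, hab, hac, hbc, hsuf⟩ := hperf
  obtain ⟨s, hs⟩ := hsuf
  have sqrt3_lt : Real.sqrt 3 ≤ 2 := by
    rw [show (2:ℝ) = Real.sqrt 4 by rw [show (4:ℝ) = 2^2 by norm_num, Real.sqrt_sq]; norm_num]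
    exact Real.sqrt_le_sqrt (by norm_num)
  have sqrt3_ge : (1:ℝ) ≤ Real.sqrt 3 := by
    rw [show (1:ℝ) = Real.sqrt 1 by simp]
    exact Real.sqrt_le_sqrt (by norm_num)
  -- perfect suffix fact: for d ∉ {b, c}, u ++ [d] is perfect
  have hperf' : ∀ d, d ≠ b → d ≠ c → PerfectWord (u ++ [d]) := by
    intro d hdb hdc
    exact ⟨b, c, d, hbc, hdb.symm, hdc.symm, ⟨s ++ [a], by rw [← hs]; simp⟩⟩
  have hnice' : NiceWord (u ++ [b]) :=
    ⟨b, c, hbc, ⟨s ++ [a], by rw [← hs]; simp⟩⟩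
  set S1 := ℓ.filter fun d => ¬ ContainsSquareOfPeriod (u ++ [d]) 1 ∧
          ¬ ContainsSquareOfPeriod (u ++ [d]) 2 ∧ PerfectWord (u ++ [d]) with hS1
  set S2 := ℓ.filter fun d => ¬ ContainsSquareOfPeriod (u ++ [d]) 1 ∧
          ¬ ContainsSquareOfPeriod (u ++ [d]) 2 ∧ NiceWord (u ++ [d]) with hS2
  have hsub : ∀ d ∈ ℓ \ {b, c}, d ∈ S1 := by
    intro d hd
    simp only [Finset.mem_sdiff, Finset.mem_insert, Finset.mem_singleton] at hd
    push_neg at hd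
    obtain ⟨hdl, hdb, hdc⟩ := hd
    have hns := no_squares hsf hab hac hbc ⟨s, hs⟩ hdc
    exact Finset.mem_filter.2 ⟨hdl, hns.1, hns.2, hperf' d hdb hdc⟩
  have hcard1 : 2 ≤ S1.card := by
    have h1 := Finset.le_card_sdiff ({b, c} : Finset α) ℓ
    have h2 : ({b, c} : Finset α).card ≤ 2 := Finset.card_insert_le _ _ |>.trans (by simp)
    have h3 : (ℓ \ {b, c}).card ≤ S1.card := Finset.card_le_card (fun d hd => hsub d hd)
    omega
  by_cases hb : b ∈ ℓ
  · -- b ∈ S2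
    have hb2 : b ∈ S2 := by
      have hns := no_squares hsf hab hac hbc ⟨s, hs⟩ hbc
      exact Finset.mem_filter.2 ⟨hb, hns.1, hns.2, hnice'⟩
    have hcard2 : 1 ≤ S2.card := Finset.card_pos.2 ⟨b, hb2⟩
    have h1 : (2:ℝ) ≤ (S1.card : ℝ) := by exact_mod_cast hcard1
    have h2 : (1:ℝ) ≤ (S2.card : ℝ) := by exact_mod_cast hcard2
    nlinarith [sqrt3_ge, sqrt3_lt]
  · -- b ∉ ℓ: then ℓ \ {b, c} = ℓ \ {c}, card ≥ 3
    have hcard3 : 3 ≤ S1.card := by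
      have hint : (ℓ ∩ {b, c}).card ≤ 1 := by
        have hsub' : ℓ ∩ {b, c} ⊆ {c} := by
          intro x hx
          simp only [Finset.mem_inter, Finset.mem_insert, Finset.mem_singleton] at hx ⊢
          rcases hx.2 with rfl | rfl
          · exact absurd hx.1 hb
          · rfl
        simpa using Finset.card_le_card hsub'
      have hid := Finset.card_sdiff_add_card_inter ℓ ({b, c} : Finset α)
      have h3 : (ℓ \ {b, c}).card ≤ S1.card := Finset.card_le_card (fun d hd => hsub d hd)
      omega
    have h1 : (3:ℝ) ≤ (S1.card : ℝ) := by exact_mod_cast hcard3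
    have h2 : (0:ℝ) ≤ (S2.card : ℝ) := by positivity
    nlinarith [sqrt3_ge, sqrt3_lt]
end
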